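/- Let R be a commutative ring, S an idempotent semiring, ν : R → S a generalized valuation, and A a commutative R-algebra that is an integral domain. Let C be the congruence (RingCon) on MonoidAlgebra S A generated by all pairs (ν_* f, (ν_* f).erase m) for f ∈ ker ev and m ∈ A, and let Q := (MonoidAlgebra S A) ⧸ C be the quotient semiring. Then for every commutative semiring T and every semiring homomorphism ι : S → T, there is a bijection between (1) the set of semiring homomorphisms h : Q → T satisfying h [single 1 s] = ι s for all s ∈ S (where [·] denotes the class in Q), and (2) the set of maps α : A → T with α 0 = 0, α 1 = 1, α (a*b) = α a * α b, α (r • a) = ι (ν r) * α a for all r ∈ R, a ∈ A, and α a + α b + α (a+b) = α a + α b for all a, b ∈ A; the bijection sends h to the map a ↦ h [single a 1]. -/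

import Mathlib

/-!
A ring homomorphism `h` out of the quotient with `h [single 1 s] = ι s` is the same as a
multiplicative map `α : A → T` whose lift `∑ sₐ xₐ ↦ ∑ ι sₐ * α a` kills the bend relations.
On `ν_* f` these say that in `∑ ι (ν (f a)) * α a` every term is absorbed by the sum of the
others. For a valuation `α` this holds because the other terms `f a • a` add up to
`-(f m • m)`, and `α` of a sum is absorbed by the sum of the values. Conversely, the relations
coming from the kernel elements `x_{r•a} - r xₐ` (or `(r - 1) xₐ` when `r • a = a`) and
`xₐ + x_b - x_{a+b}` give back the axioms of a valuation; `T` is idempotent since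
`ι (1 + 1) = ι 1`.
-/

open Finsupp

theorem Finsupp.mapRange_erase {α M N : Type*} [Zero M] [Zero N] {f : M → N} (hf : f 0 = 0)
    (g : α →₀ M) (a : α) : mapRange f hf (g.erase a) = (mapRange f hf g).erase a := by
  classical
  ext b
  obtain rfl | hb := eq_or_ne b a <;> simp [erase_ne, *]

theorem apply_sum_add_sum_apply {κ A T : Type*} [AddCommMonoid A] [AddCommMonoid T] {α : A → T}
    (h0 : α 0 = 0) (hbend : ∀ a b, α a + α b + α (a + b) = α a + α b)
    (s : Finset κ) (g : κ → A) : α (∑ i ∈ s, g i) + ∑ i ∈ s, α (g i) = ∑ i ∈ s, α (g i) := by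
  classical
  induction s using Finset.induction_on with
  | empty => simp [h0]
  | insert j s hj ih =>
    rw [Finset.sum_insert hj, Finset.sum_insert hj, ← ih]
    calc α (g j + ∑ i ∈ s, g i) + (α (g j) + (α (∑ i ∈ s, g i) + ∑ i ∈ s, α (g i)))
        = (α (g j) + α (∑ i ∈ s, g i) + α (g j + ∑ i ∈ s, g i)) + ∑ i ∈ s, α (g i) := by
          abel
      _ = α (g j) + (α (∑ i ∈ s, g i) + ∑ i ∈ s, α (g i)) := by rw [hbend]; abel

theorem mul_apply_add_eq_of_mul_apply_eq_zero {R T : Type*} [Ring R] [Semiring T] {w : R → T}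
    (hneg : ∀ a, w (-a) = w a) (hadd : ∀ a b, w (a + b) + w a + w b = w a + w b)
    {x : R} (y : R) {t : T} (hx : w x * t = 0) : w (x + y) * t = w y * t := by
  have h₁ : w (x + y) * t + w y * t = w y * t := by
    simpa [add_mul, hx] using congrArg (· * t) (hadd x y)
  have h₂ : w y * t + w (x + y) * t = w (x + y) * t := by
    simpa [add_mul, hneg, hx] using congrArg (· * t) (hadd (x + y) (-x))
  exact ((add_comm _ _).trans h₂).symm.trans h₁

section KernelBends

variable {R A T : Type*} [Ring R] [AddCommGroup A] [Module R A] [Semiring T]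
  {w : R → T} {α : A → T}

/-- The bend relations of `∑ w (f a) xₐ` for the `f` with `∑ f a • a = 0`, evaluated at
`xₐ ↦ α a`: each term of the sum is absorbed by the sum of the others. -/
def RespectsKernelBends (w : R → T) (α : A → T) : Prop :=
  ∀ f : A →₀ R, (f.sum fun a r => r • a) = 0 → ∀ m : A,
    w (f m) * α m + (f.erase m).sum (fun a r => w r * α a) = (f.erase m).sum fun a r => w r * α a

theorem respectsKernelBends_of_map_smul (h0 : α 0 = 0) (hneg : ∀ a, α (-a) = α a)
    (hbend : ∀ a b, α a + α b + α (a + b) = α a + α b)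
    (hsmul : ∀ (r : R) a, α (r • a) = w r * α a) : RespectsKernelBends w α := by
  intro f hf m
  simp only [← hsmul]
  have hrest : ((f.erase m).sum fun a r => r • a) = -(f m • m) :=
    eq_neg_of_add_eq_zero_right ((add_sum_erase' f m _ fun a => zero_smul R a).trans hf)
  have habsorb : α ((f.erase m).sum fun a r => r • a) + (f.erase m).sum (fun a r => α (r • a)) =
      (f.erase m).sum fun a r => α (r • a) :=
    apply_sum_add_sum_apply h0 hbend _ _
  rwa [hrest, hneg] at habsorb

namespace RespectsKernelBends

theorem add_single (H : RespectsKernelBends w α) {g : A →₀ R} {y : A} (hy : g y = 0) {t : R}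
    (h : (g.sum fun a r => r • a) + t • y = 0) :
    w t * α y + (g.sum fun a r => w r * α a) = g.sum fun a r => w r * α a := by
  have := H (g + single y t)
    (by rwa [sum_add_index' (fun a => zero_smul R a) fun a _ _ => add_smul _ _ a,
      sum_single_index (zero_smul R y)]) y
  classical
  simpa [hy, erase_add, erase_of_notMem_support, notMem_support_iff] using this

theorem pair (H : RespectsKernelBends w α) (hw0 : w 0 = 0) {x y : A} (hxy : x ≠ y) {s t : R}
    (h : s • x + t • y = 0) : w t * α y + w s * α x = w s * α x := by
  simpa [sum_single_index, hw0] using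
    H.add_single (g := Finsupp.single x s) (single_eq_of_ne hxy.symm)
      (by rwa [sum_single_index (zero_smul R x)])

theorem map_smul (H : RespectsKernelBends w α) (hw0 : w 0 = 0) (hw1 : w 1 = 1)
    (hneg : ∀ a, w (-a) = w a) (hadd : ∀ a b, w (a + b) + w a + w b = w a + w b)
    (r : R) (a : A) : α (r • a) = w r * α a := by
  by_cases hra : r • a = a
  · have hr : w (r - 1) * α a = 0 := by
      simpa using H.add_single (g := 0) rfl (t := r - 1) (by simp [sub_smul, hra])
    rw [hra, ← sub_add_cancel r 1, mul_apply_add_eq_of_mul_apply_eq_zero hneg hadd 1 hr, hw1,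
      one_mul]
  · have h₁ := H.pair hw0 hra (s := 1) (t := -r) (by simp)
    have h₂ := H.pair hw0 (Ne.symm hra) (s := -r) (t := 1) (by simp)
    simp only [hw1, hneg, one_mul] at h₁ h₂
    exact ((add_comm _ _).trans h₁).symm.trans h₂

theorem map_zero (H : RespectsKernelBends w α) (hw0 : w 0 = 0) (hw1 : w 1 = 1)
    (hneg : ∀ a, w (-a) = w a) (hadd : ∀ a b, w (a + b) + w a + w b = w a + w b) : α 0 = 0 := by
  simpa [hw0] using H.map_smul hw0 hw1 hneg hadd 0 0

theorem bend (H : RespectsKernelBends w α) (hw0 : w 0 = 0) (hw1 : w 1 = 1)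
    (hneg : ∀ a, w (-a) = w a) (hadd : ∀ a b, w (a + b) + w a + w b = w a + w b)
    (hT : ∀ t : T, t + t = t) (a b : A) : α a + α b + α (a + b) = α a + α b := by
  have h0 := H.map_zero hw0 hw1 hneg hadd
  obtain rfl | ha := eq_or_ne a 0
  · simp [h0, hT]
  obtain rfl | hb := eq_or_ne b 0
  · simp [h0, hT]
  obtain rfl | hab := eq_or_ne a b
  · have hw2 : w 2 + 1 = 1 := by
      simpa [hw1, one_add_one_eq_two, add_assoc, hT] using hadd 1 1
    rw [← two_smul R a, H.map_smul hw0 hw1 hneg hadd, hT, add_comm, ← add_one_mul, hw2, one_mul]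
  · have hy : (Finsupp.single a (1 : R) + Finsupp.single b 1 : A →₀ R) (a + b) = 0 := by
      simp [ha, hb]
    have hdisj : Disjoint (Finsupp.single a (1 : R)).support (Finsupp.single b (1 : R)).support :=
      (Finset.disjoint_singleton.2 hab).mono support_single_subset support_single_subset
    have := H.add_single hy (t := -1) (by simp [sum_add_index_of_disjoint hdisj]; abel)
    simpa [sum_add_index_of_disjoint hdisj, hw0, hw1, hneg, add_comm] using this

end RespectsKernelBends

end KernelBends

section Valuation

variable {R A T : Type*} [Ring R] [Ring A] [Module R A] [Semiring T]

def IsCompatibleValuation (w : R → T) (α : A → T) : Prop :=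
  α 0 = 0 ∧ α 1 = 1 ∧ (∀ a b : A, α (a * b) = α a * α b) ∧
    (∀ (r : R) (a : A), α (r • a) = w r * α a) ∧ ∀ a b : A, α a + α b + α (a + b) = α a + α b

theorem respectsKernelBends_iff_isCompatibleValuation {w : R → T} (hw0 : w 0 = 0)
    (hw1 : w 1 = 1) (hneg : ∀ a, w (-a) = w a)
    (hadd : ∀ a b, w (a + b) + w a + w b = w a + w b) (hT : ∀ t : T, t + t = t) (α : A →* T) :
    RespectsKernelBends w α ↔ IsCompatibleValuation w α := by
  refine ⟨fun H => ⟨H.map_zero hw0 hw1 hneg hadd, α.map_one, α.map_mul,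
    H.map_smul hw0 hw1 hneg hadd, H.bend hw0 hw1 hneg hadd hT⟩, ?_⟩
  rintro ⟨h0, -, -, hsmul, hbend⟩
  refine respectsKernelBends_of_map_smul h0 (fun a => ?_) hbend hsmul
  rw [← neg_one_smul R a, hsmul, hneg, hw1, one_mul]

end Valuation

open MonoidAlgebra

theorem MonoidAlgebra.liftNCRingHom_ofCoeff_mapRange {R S A T : Type*} [Zero R] [Semiring S]
    [Monoid A] [CommSemiring T] (ι : S →+* T) (α : A →* T) {ν : R → S} (hν0 : ν 0 = 0)
    (f : A →₀ R) :
    liftNCRingHom ι α (fun _ _ => .all _ _) (ofCoeff (mapRange ν hν0 f)) =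
      f.sum fun a r => ι (ν r) * α a :=
  sum_mapRange_index (hf := hν0) fun a => by simp

theorem MonoidAlgebra.eq_liftNCRingHom {S A T : Type*} [Semiring S] [Monoid A] [CommSemiring T]
    (ι : S →+* T) (φ : MonoidAlgebra S A →+* T) (hφ : ∀ s, φ (single 1 s) = ι s) :
    φ = liftNCRingHom ι ((φ : MonoidAlgebra S A →* T).comp (of S A)) fun _ _ => .all _ _ :=
  ringHom_ext (by simp [hφ]) (by simp)

section Tropicalization

variable {R S A T : Type*} [CommRing R] [CommSemiring S] [CommRing A] [Algebra R A]
  [CommSemiring T]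

def kernelBendRel (ν : R → S) (hν0 : ν 0 = 0) (p q : MonoidAlgebra S A) : Prop :=
  ∃ f : MonoidAlgebra R A, MonoidAlgebra.lift R A A (MonoidHom.id A) f = 0 ∧
    ∃ m : A, p = MonoidAlgebra.ofCoeff (Finsupp.mapRange ν hν0 f.coeff) ∧
      q = (MonoidAlgebra.ofCoeff (Finsupp.mapRange ν hν0 f.coeff)).erase m

theorem ringConGen_kernelBendRel_le_ker_iff (ν : R → S) (hν0 : ν 0 = 0) (ι : S →+* T)
    (α : A →* T) :
    ringConGen (kernelBendRel ν hν0) ≤ RingCon.ker (liftNCRingHom ι α fun _ _ => .all _ _) ↔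
      RespectsKernelBends (fun r => ι (ν r)) α := by
  have hker (f : A →₀ R) (m : A) :
      RingCon.ker (liftNCRingHom ι α fun _ _ => .all _ _) (ofCoeff (mapRange ν hν0 f))
          ((ofCoeff (mapRange ν hν0 f)).erase m) ↔
        ι (ν (f m)) * α m + (f.erase m).sum (fun a r => ι (ν r) * α a) =
          (f.erase m).sum fun a r => ι (ν r) * α a := by
    rw [RingCon.ker_apply, ← ofCoeff_erase, ← mapRange_erase, liftNCRingHom_ofCoeff_mapRange,
      liftNCRingHom_ofCoeff_mapRange, ← add_sum_erase' f m _ fun a => by simp [hν0]]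
  rw [RingCon.ringConGen_le]
  constructor
  · intro h f hf m
    exact (hker f m).1
      (h _ _ ⟨ofCoeff f, by simpa [MonoidAlgebra.lift_apply] using hf, m, rfl, rfl⟩)
  · rintro H _ _ ⟨f, hf, m, rfl, rfl⟩
    exact (hker f.coeff m).2 (H f.coeff (by simpa [MonoidAlgebra.lift_apply] using hf) m)

end Tropicalization

theorem universal_tropicalization_represents_valuations_general
    {R S A T : Type*} [CommRing R] [CommSemiring S] [CommRing A] [Algebra R A]
    [CommSemiring T]
    (hS : ∀ s : S, s + s = s)
    (ν : R → S) (hν0 : ν 0 = 0) (hν1 : ν 1 = 1)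
    (hνneg : ∀ a : R, ν (-a) = ν a)
    (hνadd : ∀ a b : R, ν (a + b) + ν a + ν b = ν a + ν b)
    (ι : S →+* T)
    (C : RingCon (MonoidAlgebra S A))
    (hC : C = ringConGen (fun (p q : MonoidAlgebra S A) =>
      ∃ f : MonoidAlgebra R A, MonoidAlgebra.lift R A A (MonoidHom.id A) f = 0 ∧
        ∃ m : A, p = MonoidAlgebra.ofCoeff (Finsupp.mapRange ν hν0 f.coeff) ∧
          q = (MonoidAlgebra.ofCoeff (Finsupp.mapRange ν hν0 f.coeff)).erase m)) :
    ∃ e : {h : C.Quotient →+* T //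
            ∀ s : S, h (C.mk' (MonoidAlgebra.single (1 : A) s)) = ι s} ≃
          {α : A → T // α 0 = 0 ∧ α 1 = 1 ∧ (∀ a b : A, α (a * b) = α a * α b) ∧
            (∀ (r : R) (a : A), α (r • a) = ι (ν r) * α a) ∧
            ∀ a b : A, α a + α b + α (a + b) = α a + α b},
      ∀ h, (e h : A → T) = fun a => (h : C.Quotient →+* T) (C.mk' (MonoidAlgebra.single a 1)) := by
  have hC' : C = ringConGen (kernelBendRel ν hν0) := hC
  have hT (t : T) : t + t = t := by rw [← mul_one t, ← mul_add, ← map_one ι, ← map_add, hS]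
  have hval := respectsKernelBends_iff_isCompatibleValuation (A := A) (w := fun r => ι (ν r))
    (by simp [hν0]) (by simp [hν1]) (by simp [hνneg]) (fun a b => by simp only [← map_add, hνadd])
    hT
  refine ⟨Equiv.ofBijective (fun h => ⟨fun a => h.1 (C.mk' (single a 1)), ?_⟩) ⟨?_, ?_⟩,
    fun _ => rfl⟩
  · let φ : MonoidAlgebra S A →+* T := h.1.comp C.mk'
    refine (hval ((φ : MonoidAlgebra S A →* T).comp (of S A))).1
      ((ringConGen_kernelBendRel_le_ker_iff ν hν0 ι _).1 ?_)
    rw [← hC', ← eq_liftNCRingHom ι φ h.2]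
    exact fun x y hxy => (RingCon.ker_apply _).2 (congrArg h.1 (C.eq.2 hxy))
  · intro h₁ h₂ h
    exact Subtype.ext <| RingCon.Quotient.hom_ext <| ringHom_ext
      (fun s => (h₁.2 s).trans (h₂.2 s).symm) (congrFun (congrArg Subtype.val h))
  · rintro ⟨α, hα⟩
    let αM : A →* T := ⟨⟨α, hα.2.1⟩, hα.2.2.1⟩
    have hle := hC' ▸ (ringConGen_kernelBendRel_le_ker_iff ν hν0 ι αM).2 ((hval αM).2 hα)
    exact ⟨⟨C.lift _ hle, fun s => by simp [αM, hα.2.1]⟩,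
      Subtype.ext (funext fun a => by simp [αM])⟩

/-- **The universal tropicalization represents the moduli functor of valuations (affine case).**
Let `ν : R → S` be a generalized valuation into an idempotent semiring and `A` an integral
`R`-algebra.  Let `C` be the congruence on `MonoidAlgebra S A` generated by the bend relations
of the coefficientwise valuations of the elements of the kernel of the evaluation map
`ev : MonoidAlgebra R A → A`, and `Q` the quotient semiring (the semiring of functions on the
universal tropicalization of `Spec A`).  Then for any semiring homomorphism `ι : S → T`, the
`S`-algebra homomorphisms `Q → T` correspond bijectively to the valuations `A → T`
compatible with `ν`, via `h ↦ (a ↦ h [xₐ])`. -/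
theorem universal_tropicalization_represents_valuations
    {R S A T : Type*} [CommRing R] [CommSemiring S] [CommRing A] [IsDomain A] [Algebra R A]
    [CommSemiring T]
    (hS : ∀ s : S, s + s = s)
    (ν : R → S) (hν0 : ν 0 = 0) (hν1 : ν 1 = 1)
    (hνmul : ∀ a b : R, ν (a * b) = ν a * ν b)
    (hνneg : ∀ a : R, ν (-a) = ν a)
    (hνadd : ∀ a b : R, ν (a + b) + ν a + ν b = ν a + ν b)
    (ι : S →+* T)
    (C : RingCon (MonoidAlgebra S A))
    (hC : C = ringConGen (fun (p q : MonoidAlgebra S A) =>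
      ∃ f : MonoidAlgebra R A, MonoidAlgebra.lift R A A (MonoidHom.id A) f = 0 ∧
        ∃ m : A, p = MonoidAlgebra.ofCoeff (Finsupp.mapRange ν hν0 f.coeff) ∧
          q = (MonoidAlgebra.ofCoeff (Finsupp.mapRange ν hν0 f.coeff)).erase m)) :
    ∃ e : {h : C.Quotient →+* T //
            ∀ s : S, h (C.mk' (MonoidAlgebra.single (1 : A) s)) = ι s} ≃
          {α : A → T // α 0 = 0 ∧ α 1 = 1 ∧ (∀ a b : A, α (a * b) = α a * α b) ∧
            (∀ (r : R) (a : A), α (r • a) = ι (ν r) * α a) ∧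
            ∀ a b : A, α a + α b + α (a + b) = α a + α b},
      ∀ h, (e h : A → T) = fun a => (h : C.Quotient →+* T) (C.mk' (MonoidAlgebra.single a 1)) :=
  universal_tropicalization_represents_valuations_general hS ν hν0 hν1 hνneg hνadd ι C hC
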